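/- Let n ≥ 2, m = 3n-2 and σ ∈ S_n. In W(1) the following relation holds, for all x_i, y_j, z_k ∈ [m]: Σ_{i=1}^{n} (−1)^{i}[[[y_1,…,y_n],x_i,z_1,…,z_{n-2}],x_1,…,x̂_i,…,x_n] = sign(σ) · Σ_{i=1}^{n} (−1)^{i}[[[y_1,…,y_n],x_{σ(i)},z_1,…,z_{n-2}],x_{σ(1)},…, x̂_{σ(i)},…, x_{σ(n)}]. -/

import Mathlib

/-! With `v = ι ∘ x`, the sum is `-∑ᵢ (-1)^i f (vᵢ) (v̂ᵢ)` for `f a w = [[y, a, z], w]`, which is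
linear in `a` and alternating in `w`. Such a sum is Mathlib's `alternatizeUncurryFin f`, an
alternating map of `v`, so precomposing `v` with `σ` multiplies it by `sign σ`; since
`sign σ ^ 2 = 1` this is the claim. -/

namespace LAnKe

/-- Prepend an element to a tuple of length `n - 1`, obtaining a tuple of length `n`. -/
def consF {α : Type} {n : ℕ} (a : α) (v : Fin (n - 1) → α) : Fin n → α := fun i =>
  if h : (i : ℕ) = 0 then a else v ⟨(i : ℕ) - 1, by omega⟩

/-- Prepend two elements to a tuple of length `n - 2`, obtaining a tuple of length `n`. -/
def cons2F {α : Type} {n : ℕ} (a b : α) (v : Fin (n - 2) → α) : Fin n → α := fun i =>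
  if h : (i : ℕ) = 0 then a else if h2 : (i : ℕ) = 1 then b else v ⟨(i : ℕ) - 2, by omega⟩

/-- The tuple obtained from `v : Fin a → α` by omitting the `i`-th entry (a "hat"). -/
def omitF {α : Type} {a : ℕ} (v : Fin a → α) (i : Fin a) : Fin (a - 1) → α := fun k =>
  if h : (k : ℕ) < (i : ℕ) then v ⟨(k : ℕ), by omega⟩ else v ⟨(k : ℕ) + 1, by omega⟩

variable (K : Type) [Field K] {n : ℕ} {L : Type} [AddCommGroup L] [Module K L]

/-- `[a, y₁, …, y_{n-1}]`: the bracket applied to `a` followed by the `n-1` entries of `y`. -/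
def app1 (br : AlternatingMap K L L (Fin n)) (a : L) (y : Fin (n - 1) → L) : L :=
  br (consF a y)

/-- `[a, b, z₁, …, z_{n-2}]`. -/
def app2 (br : AlternatingMap K L L (Fin n)) (a b : L) (z : Fin (n - 2) → L) : L :=
  br (cons2F a b z)

/-- The bracketed word `[[[x₁,…,x_n], y₁,…,y_{n-1}], z₁,…,z_{n-1}]` (a word of type (G1)). -/
def w1 (br : AlternatingMap K L L (Fin n)) (x : Fin n → L) (y z : Fin (n - 1) → L) : L :=
  app1 K br (app1 K br (br x) y) z

/-- The bracketed word `[[x₁,…,x_n], [y₁,…,y_n], z₁,…,z_{n-2}]` (a word of type (G2)). -/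
def w2 (br : AlternatingMap K L L (Fin n)) (x y : Fin n → L) (z : Fin (n - 2) → L) : L :=
  app2 K br (br x) (br y) z

/-- The generalized Jacobi identity for an alternating `n`-ary bracket:
`[[x₁,…,x_n],y₁,…,y_{n-1}] = ∑ᵢ [x₁,…,x_{i-1},[x_i,y₁,…,y_{n-1}],x_{i+1},…,x_n]`. -/
def GJId (br : AlternatingMap K L L (Fin n)) : Prop :=
  ∀ (x : Fin n → L) (y : Fin (n - 1) → L),
    app1 K br (br x) y = ∑ i : Fin n, br (Function.update x i (app1 K br (x i) y))

/-- A linear map commuting with the (alternating `n`-ary) brackets. -/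
def IsBracketHom {L' : Type} [AddCommGroup L'] [Module K L']
    (br : AlternatingMap K L L (Fin n)) (br' : AlternatingMap K L' L' (Fin n))
    (F : L →ₗ[K] L') : Prop :=
  ∀ x : Fin n → L, F (br x) = br' (fun i => F (x i))

/-- `(L, br, ι)` is a free LAnKe (free Filippov algebra) on the set `X`: the bracket is
alternating (hence antisymmetric, as `char K = 0`), satisfies the generalized Jacobi
identity, and every map from `X` to a LAnKe extends uniquely to a bracket-preserving
linear map. -/
def IsFreeLAnKe {X : Type} (br : AlternatingMap K L L (Fin n)) (ι : X → L) : Prop :=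
  GJId K br ∧
    ∀ (L' : Type) [AddCommGroup L'] [Module K L'],
      ∀ (br' : AlternatingMap K L' L' (Fin n)), GJId K br' →
        ∀ f : X → L', ∃! F : L →ₗ[K] L', IsBracketHom K br br' F ∧ ∀ i, F (ι i) = f i

/-- `(A, br, ι)` is a free anticommutative `n`-ary algebra on the set `X`: the bracket is
alternating, and every map from `X` to an algebra with an alternating `n`-ary bracket
extends uniquely to a bracket-preserving linear map.  (The "bracketed words subject only to
antisymmetry" of the paper live inside such an algebra.) -/
def IsFreeAnti {X : Type} (br : AlternatingMap K L L (Fin n)) (ι : X → L) : Prop :=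
  ∀ (L' : Type) [AddCommGroup L'] [Module K L'],
    ∀ (br' : AlternatingMap K L' L' (Fin n)),
      ∀ f : X → L', ∃! F : L →ₗ[K] L', IsBracketHom K br br' F ∧ ∀ i, F (ι i) = f i

variable (m : ℕ)

/-- The letters `x, y, z` of a bracketed permutation of type (G1): jointly they are
pairwise distinct (with `m = 3n-2` this means each letter of `[m]` occurs exactly once). -/
def ValidG1 (x : Fin n → Fin m) (y z : Fin (n - 1) → Fin m) : Prop :=
  Function.Injective (Sum.elim x (Sum.elim y z))

/-- The letters `x, y, z` of a bracketed permutation of type (G2): jointly distinct. -/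
def ValidG2 (x y : Fin n → Fin m) (z : Fin (n - 2) → Fin m) : Prop :=
  Function.Injective (Sum.elim x (Sum.elim y z))

variable {m}

/-- The word `(G1) = [[[x₁,…,x_n],y₁,…,y_{n-1}],z₁,…,z_{n-1}]` on letters `ι ∘ x` etc. -/
def wG1 (br : AlternatingMap K L L (Fin n)) (ι : Fin m → L) (x : Fin n → Fin m)
    (y z : Fin (n - 1) → Fin m) : L :=
  w1 K br (ι ∘ x) (ι ∘ y) (ι ∘ z)

/-- The word `(G2) = [[x₁,…,x_n],[y₁,…,y_n],z₁,…,z_{n-2}]` on letters `ι ∘ x` etc. -/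
def wG2 (br : AlternatingMap K L L (Fin n)) (ι : Fin m → L) (x y : Fin n → Fin m)
    (z : Fin (n - 2) → Fin m) : L :=
  w2 K br (ι ∘ x) (ι ∘ y) (ι ∘ z)

/-- The set of all bracketed permutations of type (G1). -/
def G1Words (br : AlternatingMap K L L (Fin n)) (ι : Fin m → L) : Set L :=
  {l | ∃ x y z, ValidG1 m x y z ∧ l = wG1 K br ι x y z}

/-- The set of all bracketed permutations of type (G2). -/
def G2Words (br : AlternatingMap K L L (Fin n)) (ι : Fin m → L) : Set L :=
  {l | ∃ x y z, ValidG2 m x y z ∧ l = wG2 K br ι x y z}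

/-- The multilinear component: the span of all bracketed permutations (with three
brackets) on `[m]`.  For the free LAnKe this is `Lie_n(m)`; for the free anticommutative
algebra this is the space `W = W_{n,3}` of the paper. -/
def LieComp (br : AlternatingMap K L L (Fin n)) (ι : Fin m → L) : Submodule K L :=
  Submodule.span K (G1Words K br ι ∪ G2Words K br ι)

/-- `W(1)`: the span of the bracketed permutations of type (G1) (this set is stable under
the `S_m`-action, so this is the `S_m`-submodule generated by the (G1)'s). -/
def W1Comp (br : AlternatingMap K L L (Fin n)) (ι : Fin m → L) : Submodule K L :=
  Submodule.span K (G1Words K br ι)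

/-- The relator
`(R1) = (G1) - ∑_{i=1}^{n} (-1)^{i-1} [[[x_i,y₁,…,y_{n-1}],x₁,…,x̂_i,…,x_n],z₁,…,z_{n-1}]`. -/
def R1elt (br : AlternatingMap K L L (Fin n)) (ι : Fin m → L) (x : Fin n → Fin m)
    (y z : Fin (n - 1) → Fin m) : L :=
  wG1 K br ι x y z -
    ∑ i : Fin n, ((-1 : K)) ^ (i : ℕ) •
      w1 K br (consF (ι (x i)) (ι ∘ y)) (ι ∘ omitF x i) (ι ∘ z)

/-- The relator `(R2) = (G1) - [[[x],z],y] - ∑_{i=1}^{n-1} (-1)^{i-1}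
[[x₁,…,x_n],[y_i,z₁,…,z_{n-1}],y₁,…,ŷ_i,…,y_{n-1}]`. -/
def R2elt (br : AlternatingMap K L L (Fin n)) (ι : Fin m → L) (x : Fin n → Fin m)
    (y z : Fin (n - 1) → Fin m) : L :=
  wG1 K br ι x y z - wG1 K br ι x z y -
    ∑ i : Fin (n - 1), ((-1 : K)) ^ (i : ℕ) •
      w2 K br (ι ∘ x) (consF (ι (y i)) (ι ∘ z)) (ι ∘ omitF y i)

/-- The relator `(R3) = (G2) - ∑_{i=1}^{n} (-1)^{i}
[[[y₁,…,y_n],x_i,z₁,…,z_{n-2}],x₁,…,x̂_i,…,x_n]`. -/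
def R3elt (br : AlternatingMap K L L (Fin n)) (ι : Fin m → L) (x y : Fin n → Fin m)
    (z : Fin (n - 2) → Fin m) : L :=
  wG2 K br ι x y z -
    ∑ i : Fin n, ((-1 : K)) ^ ((i : ℕ) + 1) •
      app1 K br (app2 K br (br (ι ∘ y)) (ι (x i)) (ι ∘ z)) (ι ∘ omitF x i)

/-- The relator `(R4) = (G1) - [[[x],z],y] - ∑_{i=1}^{n-1} (-1)^{i-1} ∑_{j=1}^{n} (-1)^{j}
[[[y_i,z₁,…,z_{n-1}],x_j,y₁,…,ŷ_i,…,y_{n-1}],x₁,…,x̂_j,…,x_n]`. -/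
def R4elt (br : AlternatingMap K L L (Fin n)) (ι : Fin m → L) (x : Fin n → Fin m)
    (y z : Fin (n - 1) → Fin m) : L :=
  wG1 K br ι x y z - wG1 K br ι x z y -
    ∑ i : Fin (n - 1), ∑ j : Fin n,
      (((-1 : K)) ^ (i : ℕ) * ((-1 : K)) ^ ((j : ℕ) + 1)) •
        app1 K br
          (app2 K br (br (consF (ι (y i)) (ι ∘ z))) (ι (x j)) (ι ∘ omitF y i))
          (ι ∘ omitF x j)

/-- The relator `(R5) = ∑_{i=1}^{n} [[[x₁,…,x_n],y_i,z₁,…,z_{n-2}],y₁,…,ŷ_i,…,y_n]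
+ ∑_{i=1}^{n} [[[y₁,…,y_n],x_i,z₁,…,z_{n-2}],x₁,…,x̂_i,…,x_n]`. -/
def R5elt (br : AlternatingMap K L L (Fin n)) (ι : Fin m → L) (x y : Fin n → Fin m)
    (z : Fin (n - 2) → Fin m) : L :=
  (∑ i : Fin n,
      app1 K br (app2 K br (br (ι ∘ x)) (ι (y i)) (ι ∘ z)) (ι ∘ omitF y i)) +
    ∑ i : Fin n,
      app1 K br (app2 K br (br (ι ∘ y)) (ι (x i)) (ι ∘ z)) (ι ∘ omitF x i)

/-- The set of all relators (R1). -/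
def R1Set (br : AlternatingMap K L L (Fin n)) (ι : Fin m → L) : Set L :=
  {l | ∃ x y z, ValidG1 m x y z ∧ l = R1elt K br ι x y z}

/-- The set of all relators (R2). -/
def R2Set (br : AlternatingMap K L L (Fin n)) (ι : Fin m → L) : Set L :=
  {l | ∃ x y z, ValidG1 m x y z ∧ l = R2elt K br ι x y z}

/-- The set of all relators (R3). -/
def R3Set (br : AlternatingMap K L L (Fin n)) (ι : Fin m → L) : Set L :=
  {l | ∃ x y z, ValidG2 m x y z ∧ l = R3elt K br ι x y z}

/-- The set of all relators (R4). -/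
def R4Set (br : AlternatingMap K L L (Fin n)) (ι : Fin m → L) : Set L :=
  {l | ∃ x y z, ValidG1 m x y z ∧ l = R4elt K br ι x y z}

/-- The set of all relators (R5). -/
def R5Set (br : AlternatingMap K L L (Fin n)) (ι : Fin m → L) : Set L :=
  {l | ∃ x y z, ValidG2 m x y z ∧ l = R5elt K br ι x y z}

end LAnKe

namespace LAnKe

section Tuples

variable {α : Type} {k : ℕ}

theorem consF_eq_cons (a : α) (v : Fin k → α) : consF (n := k + 1) a v = Fin.cons a v := by
  funext i
  cases i using Fin.cases <;> simp [consF]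

theorem cons2F_eq_cons_cons (a b : α) (v : Fin k → α) :
    cons2F (n := k + 2) a b v = Fin.cons a (Fin.cons b v) := by
  funext i
  rcases i with ⟨_ | _ | i, hi⟩ <;> rfl

theorem omitF_eq_removeNth (v : Fin (k + 1) → α) (i : Fin (k + 1)) :
    omitF v i = i.removeNth v := by
  funext j
  simp only [omitF, Fin.removeNth_apply, Fin.succAbove, Fin.lt_def, Fin.val_castSucc]
  split_ifs <;> rfl

theorem comp_omitF {β : Type} {a : ℕ} (f : α → β) (v : Fin a → α) (i : Fin a) :
    f ∘ omitF v i = omitF (f ∘ v) i := by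
  funext j
  simp only [omitF, Function.comp_apply]
  split_ifs <;> rfl

end Tuples

variable {K : Type} [Field K] {A : Type} [AddCommGroup A] [Module K A] {k : ℕ}

def app2LinearSnd (br : AlternatingMap K A A (Fin (k + 2))) (c : A) (z : Fin k → A) :
    A →ₗ[K] A where
  toFun a := (br.curryLeft c).curryLeft a z
  map_add' a b := by simp only [map_add, AlternatingMap.add_apply]
  map_smul' r a := by simp only [map_smul, AlternatingMap.smul_apply, RingHom.id_apply]

theorem sum_app1_app2_eq_neg_alternatizeUncurryFin (br : AlternatingMap K A A (Fin (k + 2)))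
    (c : A) (z : Fin k → A) (v : Fin (k + 2) → A) :
    ∑ i : Fin (k + 2), (-1 : K) ^ ((i : ℕ) + 1) • app1 K br (app2 K br c (v i) z) (omitF v i) =
      -AlternatingMap.alternatizeUncurryFin (br.curryLeft ∘ₗ app2LinearSnd br c z) v := by
  rw [AlternatingMap.alternatizeUncurryFin_apply, ← Finset.sum_neg_distrib]
  refine Finset.sum_congr rfl fun i _ => ?_
  rw [pow_succ, mul_neg_one, neg_smul, app1, app2, consF_eq_cons, cons2F_eq_cons_cons,
    omitF_eq_removeNth, ← Int.cast_smul_eq_zsmul K]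
  push_cast
  rfl

end LAnKe

open LAnKe in
theorem statement_17_general (K : Type) [Field K] (n m : ℕ) (hn : 2 ≤ n)
    (A : Type) [AddCommGroup A] [Module K A]
    (br : AlternatingMap K A A (Fin n)) (ι : Fin m → A)
    (σ : Equiv.Perm (Fin n))
    (x y : Fin n → Fin m) (z : Fin (n - 2) → Fin m) :
    (∑ i : Fin n, ((-1 : K)) ^ ((i : ℕ) + 1) •
        app1 K br (app2 K br (br (ι ∘ y)) (ι (x i)) (ι ∘ z)) (ι ∘ omitF x i)) =
      ((Equiv.Perm.sign σ : ℤ) : K) •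
        ∑ i : Fin n, ((-1 : K)) ^ ((i : ℕ) + 1) •
          app1 K br (app2 K br (br (ι ∘ y)) (ι ((x ∘ σ) i)) (ι ∘ z))
            (ι ∘ omitF (x ∘ σ) i) := by
  obtain ⟨k, rfl⟩ : ∃ k, n = k + 2 := ⟨n - 2, by omega⟩
  simp only [comp_omitF, ← Function.comp_apply (f := ι)]
  rw [sum_app1_app2_eq_neg_alternatizeUncurryFin br _ _ (ι ∘ x),
    sum_app1_app2_eq_neg_alternatizeUncurryFin br _ _ (ι ∘ x ∘ σ), ← Function.comp_assoc, AlternatingMap.map_perm, smul_neg, Units.smul_def,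
    ← Int.cast_smul_eq_zsmul K, smul_smul, ← Int.cast_mul, ← Units.val_mul, Int.units_mul_self,
    Units.val_one, Int.cast_one, one_smul]

open LAnKe in
/-- Lemma 5.10.  Let `n ≥ 2`, `m = 3n-2` and `σ ∈ S_n`.  In `W(1)`
(inside the free anticommutative `n`-ary algebra `A`, in which `W` and `W(1)` live) the
following relation holds for all letters:
`∑ᵢ (−1)^i [[[y],x_i,z],x₁,…,x̂_i,…,x_n] = sign σ · ∑ᵢ (−1)^i [[[y],x_{σ(i)},z],x_{σ(1)},…,x̂_{σ(i)},…,x_{σ(n)}]`. -/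
theorem statement_17 (K : Type) [Field K] [CharZero K] (n m : ℕ) (hn : 2 ≤ n)
    (hm : m = 3 * n - 2) (A : Type) [AddCommGroup A] [Module K A]
    (br : AlternatingMap K A A (Fin n)) (ι : Fin m → A)
    (hfreeA : IsFreeAnti K br ι) (σ : Equiv.Perm (Fin n))
    (x y : Fin n → Fin m) (z : Fin (n - 2) → Fin m) (hv : ValidG2 m x y z) :
    (∑ i : Fin n, ((-1 : K)) ^ ((i : ℕ) + 1) •
        app1 K br (app2 K br (br (ι ∘ y)) (ι (x i)) (ι ∘ z)) (ι ∘ omitF x i)) =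
      ((Equiv.Perm.sign σ : ℤ) : K) •
        ∑ i : Fin n, ((-1 : K)) ^ ((i : ℕ) + 1) •
          app1 K br (app2 K br (br (ι ∘ y)) (ι ((x ∘ σ) i)) (ι ∘ z))
            (ι ∘ omitF (x ∘ σ) i) :=
  statement_17_general K n m hn A br ι σ x y z
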